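/- arXiv:1108.3351 — 10 statements merged into one kernel-verified Lean document; each statement's English description precedes it below -/
import Mathlib

section
/- If θ : V(D₂) → V(D₁) is a compression map between reflexive directed graphs, and x, y, z ∈ V(D₂) satisfy xy, yz ∈ A(D₂) with (θ(x), θ(y), θ(z)) a transitive triple in D₁, then (x, y, z) is a transitive triple in D₂. -/
def Reflexive' {V : Type*} (A : V → V → Prop) : Prop := ∀ v, A v v

def Transitive' {V : Type*} (A : V → V → Prop) : Prop :=
  ∀ x y z, A x y → A y z → A x z

def Preordered {V : Type*} (A : V → V → Prop) : Prop :=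
  Reflexive' A ∧ Transitive' A

def BalancedGraph {V : Type*} (A : V → V → Prop) : Prop :=
  ∀ w x y z, A w x → A x y → A y z → A w z → (A w y ↔ A x z)

def Stable {V : Type*} (A : V → V → Prop) : Prop :=
  BalancedGraph A ∧ ∀ a b c d : V, a ≠ b → a ≠ c → a ≠ d → b ≠ c → b ≠ d → c ≠ d →
    A a b → A a c → A b c → A b d → A c d → A a d

def TransTriple {V : Type*} (A : V → V → Prop) (a b c : V) : Prop :=
  A a b ∧ A b c ∧ A a c

def IsClasp {V : Type*} (A : V → V → Prop) (x : V) : Prop :=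
  ∃ w y, w ≠ x ∧ y ≠ x ∧ A w x ∧ A x y ∧ ¬ A w y

def IsLockedClasp {V : Type*} (A : V → V → Prop) (x : V) : Prop :=
  ∃ u v w y, u ≠ x ∧ v ≠ x ∧ w ≠ x ∧ y ≠ x ∧
    TransTriple A u x y ∧ TransTriple A u x v ∧ TransTriple A w x v ∧ ¬ A w y

def Soloist {V : Type*} (A : V → V → Prop) (s : V) : Prop :=
  ∀ r, r ≠ s → ¬ (A r s ∧ A s r)

/-- A compression map between (reflexive) directed graphs, given by arrow
relations `A₂` on `V₂` and `A₁` on `V₁`: a surjection preserving arrows,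
lifting transitive triples, and inducing a bijection between the arrows
between distinct vertices. -/
def IsCompression {V₂ V₁ : Type*} (A₂ : V₂ → V₂ → Prop) (A₁ : V₁ → V₁ → Prop)
    (θ : V₂ → V₁) : Prop :=
  Function.Surjective θ ∧
  (∀ x y, A₂ x y → A₁ (θ x) (θ y)) ∧
  (∀ a b c, TransTriple A₁ a b c →
    ∃ x y z, TransTriple A₂ x y z ∧ θ x = a ∧ θ y = b ∧ θ z = c) ∧
  (∀ x y, x ≠ y → A₂ x y → θ x ≠ θ y) ∧
  (∀ x y x' y', x ≠ y → x' ≠ y' → A₂ x y → A₂ x' y' →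
    θ x = θ x' → θ y = θ y' → x = x' ∧ y = y') ∧
  (∀ a b, a ≠ b → A₁ a b → ∃ x y, x ≠ y ∧ A₂ x y ∧ θ x = a ∧ θ y = b)

/-! Loops are trivial. Otherwise lift the transitive triple `(θ x, θ y, θ z)` to `D₂`: since `θ*` is
injective on non-loop arrows, the lifted arrows over `θ x θ y` and `θ y θ z` are `xy` and `yz`
themselves, so the lift is `(x, y, z)`. -/

namespace IsCompression

variable {V₂ V₁ : Type*} {A₂ : V₂ → V₂ → Prop} {A₁ : V₁ → V₁ → Prop} {θ : V₂ → V₁}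

theorem exists_transTriple_lift (hθ : IsCompression A₂ A₁ θ) {a b c : V₁}
    (h : TransTriple A₁ a b c) :
    ∃ x y z, TransTriple A₂ x y z ∧ θ x = a ∧ θ y = b ∧ θ z = c :=
  hθ.2.2.1 a b c h

theorem map_ne (hθ : IsCompression A₂ A₁ θ) {x y : V₂} (hne : x ≠ y) (h : A₂ x y) :
    θ x ≠ θ y :=
  hθ.2.2.2.1 x y hne h

theorem eq_of_map_eq (hθ : IsCompression A₂ A₁ θ) {x y x' y' : V₂} (hne : x ≠ y)
    (h : A₂ x y) (h' : A₂ x' y') (hx : θ x' = θ x) (hy : θ y' = θ y) : x' = x ∧ y' = y := by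
  have hne' : x' ≠ y' := fun e => hθ.map_ne hne h (by rw [← hx, ← hy, e])
  exact hθ.2.2.2.2.1 x' y' x y hne' hne h' h hx hy

end IsCompression

theorem stmt0_general {V₂ V₁ : Type*} (A₂ : V₂ → V₂ → Prop) (A₁ : V₁ → V₁ → Prop)
    (θ : V₂ → V₁)
    (hθ : IsCompression A₂ A₁ θ) (x y z : V₂)
    (hxy : A₂ x y) (hyz : A₂ y z)
    (ht : TransTriple A₁ (θ x) (θ y) (θ z)) :
    TransTriple A₂ x y z := by
  refine ⟨hxy, hyz, ?_⟩
  rcases eq_or_ne x y with rfl | hxy_ne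
  · exact hyz
  rcases eq_or_ne y z with rfl | hyz_ne
  · exact hxy
  obtain ⟨x', y', z', ⟨hxy', hyz', hxz'⟩, hx, hy, hz⟩ := hθ.exists_transTriple_lift ht
  obtain ⟨rfl, rfl⟩ := hθ.eq_of_map_eq hxy_ne hxy hxy' hx hy
  obtain ⟨-, rfl⟩ := hθ.eq_of_map_eq hyz_ne hyz hyz' rfl hz
  exact hxz'

theorem stmt0 {V₂ V₁ : Type*} (A₂ : V₂ → V₂ → Prop) (A₁ : V₁ → V₁ → Prop)
    (θ : V₂ → V₁) (h₂ : Reflexive' A₂) (h₁ : Reflexive' A₁)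
    (hθ : IsCompression A₂ A₁ θ) (x y z : V₂)
    (hxy : A₂ x y) (hyz : A₂ y z)
    (ht : TransTriple A₁ (θ x) (θ y) (θ z)) :
    TransTriple A₂ x y z :=
  stmt0_general A₂ A₁ θ hθ x y z hxy hyz ht
end

section
/- If θ : V(D₂) → V(D₁) is a compression map between reflexive directed graphs and D₁ is balanced, then D₂ is balanced. -/
/-! A compression is injective on non-loop arrows, so every path `x → y → z` of `D₂` is the
unique lift of its image; hence if the image path closes to a transitive triple in `D₁`, the
lifted transitive triple is `(x, y, z)` itself and `xz` is an arrow of `D₂`. Balance of `D₂`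
then follows from balance of `D₁` applied to the image of the square. -/

namespace IsCompression

variable {V₂ V₁ : Type*} {A₂ : V₂ → V₂ → Prop} {A₁ : V₁ → V₁ → Prop} {θ : V₂ → V₁}

theorem rel_of_rel_of_map (hθ : IsCompression A₂ A₁ θ) {x y z : V₂}
    (hxy : A₂ x y) (hyz : A₂ y z) (hxz : A₁ (θ x) (θ z)) : A₂ x z := by
  obtain ⟨-, hmap, hlift, hne, hinj, -⟩ := hθ
  by_cases hxy' : x = y
  · exact hxy' ▸ hyz
  by_cases hyz' : y = z
  · exact hyz' ▸ hxy
  obtain ⟨p, q, r, ⟨hpq, hqr, hpr⟩, hp, hq, hr⟩ :=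
    hlift (θ x) (θ y) (θ z) ⟨hmap _ _ hxy, hmap _ _ hyz, hxz⟩
  have hpq' : p ≠ q := by rintro rfl; exact hne _ _ hxy' hxy (hp.symm.trans hq)
  have hqr' : q ≠ r := by rintro rfl; exact hne _ _ hyz' hyz (hq.symm.trans hr)
  obtain ⟨rfl, -⟩ := hinj p q x y hpq' hxy' hpq hxy hp hq
  obtain ⟨-, rfl⟩ := hinj q r y z hqr' hyz' hqr hyz hq hr
  exact hpr

end IsCompression

theorem stmt2_general {V₂ V₁ : Type*} (A₂ : V₂ → V₂ → Prop) (A₁ : V₁ → V₁ → Prop)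
    (θ : V₂ → V₁)
    (hθ : IsCompression A₂ A₁ θ) (hb : BalancedGraph A₁) :
    BalancedGraph A₂ := by
  intro w x y z hwx hxy hyz hwz
  have hmap := hθ.2.1
  have himage := hb (θ w) (θ x) (θ y) (θ z) (hmap _ _ hwx) (hmap _ _ hxy) (hmap _ _ hyz)
    (hmap _ _ hwz)
  exact ⟨fun hwy => hθ.rel_of_rel_of_map hxy hyz (himage.mp (hmap _ _ hwy)),
    fun hxz => hθ.rel_of_rel_of_map hwx hxy (himage.mpr (hmap _ _ hxz))⟩

theorem stmt2 {V₂ V₁ : Type*} (A₂ : V₂ → V₂ → Prop) (A₁ : V₁ → V₁ → Prop)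
    (θ : V₂ → V₁) (h₂ : Reflexive' A₂) (h₁ : Reflexive' A₁)
    (hθ : IsCompression A₂ A₁ θ) (hb : BalancedGraph A₁) :
    BalancedGraph A₂ :=
  stmt2_general A₂ A₁ θ hθ hb
end

section
/- In a stable reflexive directed graph D, every clasp is a soloist: if x is a clasp, then there is no vertex r ≠ x with both rx ∈ A(D) and xr ∈ A(D). -/
theorem BalancedGraph.arrow_to_partner {V : Type*} {A : V → V → Prop} (hbal : BalancedGraph A)
    (hr : Reflexive' A) {w x r : V} (hwx : A w x) (hxr : A x r) (hrx : A r x) : A w r :=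
  (hbal w x r x hwx hxr hrx hwx).mpr (hr x)

theorem BalancedGraph.arrow_from_partner {V : Type*} {A : V → V → Prop} (hbal : BalancedGraph A)
    (hr : Reflexive' A) {x r y : V} (hxr : A x r) (hrx : A r x) (hxy : A x y) : A r y :=
  (hbal x r x y hxr hrx hxy hxy).mp (hr x)

/-- In a reflexive graph the stability axiom needs only `b ≠ c`: every other coincidence among
`a, b, c, d` makes `A a d` one of the given arrows or a loop. -/
theorem Stable.arrow_of_transTriple_transTriple {V : Type*} {A : V → V → Prop} (hs : Stable A)
    (hr : Reflexive' A) {a b c d : V} (habc : TransTriple A a b c) (hbcd : TransTriple A b c d)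
    (hbc : b ≠ c) : A a d := by
  obtain ⟨hab, -, hac⟩ := habc
  obtain ⟨hbc', hcd, hbd⟩ := hbcd
  rcases eq_or_ne a b with rfl | hab'
  · exact hbd
  rcases eq_or_ne a c with rfl | hac'
  · exact hcd
  rcases eq_or_ne a d with rfl | had
  · exact hr a
  rcases eq_or_ne b d with rfl | hbd'
  · exact hab
  rcases eq_or_ne c d with rfl | hcd'
  · exact hac
  exact hs.2 a b c d hab' hac' had hbc hbd' hcd' hab hac hbc' hbd hcd

theorem stmt4 {V : Type*} (A : V → V → Prop) (hr : Reflexive' A)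
    (hs : Stable A) (x : V) (hx : IsClasp A x) :
    Soloist A x := by
  obtain ⟨w, y, -, -, hwx, hxy, hwy⟩ := hx
  rintro r hrx ⟨hArx, hAxr⟩
  have hwr : A w r := hs.1.arrow_to_partner hr hwx hAxr hArx
  have hry : A r y := hs.1.arrow_from_partner hr hAxr hArx hxy
  exact hwy (hs.arrow_of_transTriple_transTriple hr ⟨hwr, hArx, hwx⟩ ⟨hArx, hxy, hry⟩ hrx)
end

section
/- Let D be a stable reflexive directed graph, s a soloist, and suppose (a, b, s) is a transitive triple with a, b ∈ V(D)∖{s}, a ≠ b. If sc ∈ A(D) for some vertex c, then ac ∈ A(D) if and only if bc ∈ A(D). -/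
theorem BalancedGraph.arrow_of_transTriple {V : Type*} {A : V → V → Prop}
    (hA : BalancedGraph A) {a b s c : V} (ht : TransTriple A a b s) (hsc : A s c)
    (hac : A a c) : A b c :=
  (hA a b s c ht.1 ht.2.1 hsc hac).mp ht.2.2

theorem Stable.arrow_of_transTriple_of_transTriple {V : Type*} {A : V → V → Prop}
    (hr : Reflexive' A) (hA : Stable A) {a b c d : V}
    (hab : a ≠ b) (hac : a ≠ c) (hbc : b ≠ c)
    (habc : TransTriple A a b c) (hbcd : TransTriple A b c d) : A a d := by
  by_cases hda : d = a
  · exact hda ▸ hr a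
  by_cases hdb : d = b
  · exact hdb ▸ habc.1
  by_cases hdc : d = c
  · exact hdc ▸ habc.2.2
  exact hA.2 a b c d hab hac (Ne.symm hda) hbc (Ne.symm hdb) (Ne.symm hdc)
    habc.1 habc.2.2 habc.2.1 hbcd.2.2 hbcd.2.1

theorem stmt5_general {V : Type*} (A : V → V → Prop) (hr : Reflexive' A)
    (hs : Stable A) (s : V)
    (a b : V) (ha : a ≠ s) (hb : b ≠ s) (hab : a ≠ b)
    (ht : TransTriple A a b s) (c : V) (hsc : A s c) :
    A a c ↔ A b c :=
  ⟨hs.1.arrow_of_transTriple ht hsc,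
    fun hbc => hs.arrow_of_transTriple_of_transTriple hr hab ha hb ht ⟨ht.2.1, hsc, hbc⟩⟩

theorem stmt5 {V : Type*} (A : V → V → Prop) (hr : Reflexive' A)
    (hs : Stable A) (s : V) (hsol : Soloist A s)
    (a b : V) (ha : a ≠ s) (hb : b ≠ s) (hab : a ≠ b)
    (ht : TransTriple A a b s) (c : V) (hsc : A s c) :
    A a c ↔ A b c :=
  stmt5_general A hr hs s a b ha hb hab ht c hsc
end

section
/- Let D be a stable reflexive directed graph, s a soloist, and suppose (a, s, c) is a transitive triple with a, c ∈ V(D)∖{s}. Then a ≠ c, and for any vertex x with xa ∈ A(D), one has xc ∈ A(D) if and only if xs ∈ A(D). -/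
section

variable {V : Type*} {A : V → V → Prop}

theorem Soloist.ne_of_transTriple {s a c : V} (hsol : Soloist A s) (ha : a ≠ s)
    (ht : TransTriple A a s c) : a ≠ c := by
  rintro rfl
  exact hsol a ha ⟨ht.1, ht.2.1⟩

theorem BalancedGraph.adj_of_transTriple_of_adj {a s c x : V} (hb : BalancedGraph A)
    (ht : TransTriple A a s c) (hxa : A x a) (hxc : A x c) : A x s :=
  (hb x a s c hxa ht.1 ht.2.1 hxc).mpr ht.2.2

theorem Stable.adj_of_transTriple_of_adj {a s c x : V} (hr : Reflexive' A) (hs : Stable A)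
    (ht : TransTriple A a s c) (has : a ≠ s) (hac : a ≠ c) (hsc : s ≠ c) (hx : x ≠ s)
    (hxa : A x a) (hxs : A x s) : A x c := by
  obtain rfl | hxa_ne := eq_or_ne x a
  · exact ht.2.2
  obtain rfl | hxc_ne := eq_or_ne x c
  · exact hr x
  exact hs.2 x a s c hxa_ne hx hxc_ne has hac hsc hxa hxs ht.1 ht.2.2 ht.2.1

end

theorem stmt7 {V : Type*} (A : V → V → Prop) (hr : Reflexive' A)
    (hs : Stable A) (s : V) (hsol : Soloist A s)
    (a c : V) (ha : a ≠ s) (hc : c ≠ s)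
    (ht : TransTriple A a s c) :
    a ≠ c ∧ ∀ x : V, A x a → (A x c ↔ A x s) := by
  have hac : a ≠ c := hsol.ne_of_transTriple ha ht
  refine ⟨hac, fun x hxa => ⟨hs.1.adj_of_transTriple_of_adj ht hxa, fun hxs => ?_⟩⟩
  obtain rfl | hx := eq_or_ne x s
  · exact absurd ⟨ht.1, hxa⟩ (hsol a ha)
  · exact hs.adj_of_transTriple_of_adj hr ht ha hac hc.symm hx hxa hxs
end

section
/- Let D be a stable reflexive directed graph, s a soloist, and suppose (a, s, c) is a transitive triple with a, c ∈ V(D)∖{s}. If cd ∈ A(D) for some vertex d, then ad ∈ A(D) if and only if sd ∈ A(D). -/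
theorem Soloist.not_rel_of_rel {V : Type*} {A : V → V → Prop} {s r : V} (hsol : Soloist A s)
    (hr : r ≠ s) (hrs : A r s) : ¬ A s r :=
  fun hsr => hsol r hr ⟨hrs, hsr⟩

theorem BalancedGraph.rel_of_transTriple {V : Type*} {A : V → V → Prop} (hb : BalancedGraph A)
    {a b c d : V} (ht : TransTriple A a b c) (hcd : A c d) (had : A a d) : A b d :=
  (hb a b c d ht.1 ht.2.1 hcd had).mp ht.2.2

theorem Stable.rel_of_transTriple {V : Type*} {A : V → V → Prop} (hs : Stable A)
    {a b c d : V} (ht : TransTriple A a b c) (hab : a ≠ b) (hac : a ≠ c) (hbc : b ≠ c)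
    (had : a ≠ d) (hbd : A b d) (hcd : A c d) : A a d := by
  obtain ⟨hab', hbc', hac'⟩ := ht
  by_cases hdb : d = b
  · exact hdb ▸ hab'
  by_cases hdc : d = c
  · exact hdc ▸ hac'
  exact hs.2 a b c d hab hac had hbc (Ne.symm hdb) (Ne.symm hdc) hab' hac' hbc' hbd hcd

theorem stmt8_general {V : Type*} (A : V → V → Prop)
    (hs : Stable A) (s : V) (hsol : Soloist A s)
    (a c : V) (ha : a ≠ s) (hc : c ≠ s)
    (ht : TransTriple A a s c) (d : V) (hcd : A c d) :
    A a d ↔ A s d := by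
  have hac : a ≠ c := by
    rintro rfl
    exact hsol.not_rel_of_rel ha ht.1 ht.2.1
  refine ⟨hs.1.rel_of_transTriple ht hcd, fun hsd => ?_⟩
  have had : a ≠ d := by
    rintro rfl
    exact hsol.not_rel_of_rel ha ht.1 hsd
  exact hs.rel_of_transTriple ht ha hac hc.symm had hsd hcd

theorem stmt8 {V : Type*} (A : V → V → Prop) (hr : Reflexive' A)
    (hs : Stable A) (s : V) (hsol : Soloist A s)
    (a c : V) (ha : a ≠ s) (hc : c ≠ s)
    (ht : TransTriple A a s c) (d : V) (hcd : A c d) :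
    A a d ↔ A s d :=
  stmt8_general A hs s hsol a c ha hc ht d hcd
end

section
/- Let D be a stable reflexive directed graph, s a soloist, and suppose (s, b, c) is a transitive triple with b, c ∈ V(D)∖{s}, b ≠ c. If cd ∈ A(D) for some vertex d, then bd ∈ A(D) if and only if sd ∈ A(D). -/
theorem BalancedGraph.adj_middle_of_transTriple {V : Type*} {A : V → V → Prop}
    (hbal : BalancedGraph A)
    {s b c d : V} (ht : TransTriple A s b c) (hcd : A c d) (hsd : A s d) : A b d :=
  (hbal s b c d ht.1 ht.2.1 hcd hsd).mp ht.2.2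

theorem Stable.adj_source_of_transTriple {V : Type*} {A : V → V → Prop} (hs : Stable A)
    {s b c d : V} (hb : b ≠ s) (hc : c ≠ s) (hbc : b ≠ c) (hds : d ≠ s)
    (ht : TransTriple A s b c) (hbd : A b d) (hcd : A c d) : A s d := by
  obtain ⟨hsb, hbc', hsc⟩ := ht
  by_cases hdb : d = b
  · exact hdb ▸ hsb
  by_cases hdc : d = c
  · exact hdc ▸ hsc
  exact hs.2 s b c d hb.symm hc.symm (Ne.symm hds) hbc (Ne.symm hdb) (Ne.symm hdc)
    hsb hsc hbc' hbd hcd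

theorem Soloist.ne_of_adj_of_adj {V : Type*} {A : V → V → Prop} {s c d : V}
    (hsol : Soloist A s) (hc : c ≠ s) (hsc : A s c) (hcd : A c d) : d ≠ s := by
  rintro rfl
  exact hsol c hc ⟨hcd, hsc⟩

theorem stmt9_general {V : Type*} (A : V → V → Prop)
    (hs : Stable A) (s : V) (hsol : Soloist A s)
    (b c : V) (hb : b ≠ s) (hc : c ≠ s) (hbc : b ≠ c)
    (ht : TransTriple A s b c) (d : V) (hcd : A c d) :
    A b d ↔ A s d :=
  ⟨fun hbd => hs.adj_source_of_transTriple hb hc hbc (hsol.ne_of_adj_of_adj hc ht.2.2 hcd)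
      ht hbd hcd,
    fun hsd => hs.1.adj_middle_of_transTriple ht hcd hsd⟩

theorem stmt9 {V : Type*} (A : V → V → Prop) (hr : Reflexive' A)
    (hs : Stable A) (s : V) (hsol : Soloist A s)
    (b c : V) (hb : b ≠ s) (hc : c ≠ s) (hbc : b ≠ c)
    (ht : TransTriple A s b c) (d : V) (hcd : A c d) :
    A b d ↔ A s d :=
  stmt9_general A hs s hsol b c hb hc hbc ht d hcd
end

section
/- Let D be a stable reflexive directed graph, s a soloist, and suppose (s, b, c) is a transitive triple with b, c ∈ V(D)∖{s}, b ≠ c. If as ∈ A(D) for some vertex a, then ab ∈ A(D) if and only if ac ∈ A(D). -/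
theorem BalancedGraph.arrow_of_transTriple_of_arrow_last {V : Type*} {A : V → V → Prop}
    (hA : BalancedGraph A) {a s b c : V} (has : A a s) (ht : TransTriple A s b c) (hac : A a c) :
    A a b :=
  (hA a s b c has ht.1 ht.2.1 hac).mpr ht.2.2

theorem Stable.arrow_of_transTriple_of_arrow_middle {V : Type*} {A : V → V → Prop}
    (hr : Reflexive' A) (hA : Stable A) {a s b c : V} (hsb : s ≠ b) (hsc : s ≠ c) (hbc : b ≠ c)
    (has : A a s) (ht : TransTriple A s b c) (hab : A a b) : A a c := by
  obtain ⟨hsb', hbc', hsc'⟩ := ht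
  rcases eq_or_ne a s with rfl | has_ne
  · exact hsc'
  rcases eq_or_ne a b with rfl | hab_ne
  · exact hbc'
  rcases eq_or_ne a c with rfl | hac_ne
  · exact hr a
  exact hA.2 a s b c has_ne hab_ne hac_ne hsb hsc hbc has hab hsb' hsc' hbc'

theorem stmt10_general {V : Type*} (A : V → V → Prop) (hr : Reflexive' A)
    (hs : Stable A) (s : V)
    (b c : V) (hb : b ≠ s) (hc : c ≠ s) (hbc : b ≠ c)
    (ht : TransTriple A s b c) (a : V) (has : A a s) :
    A a b ↔ A a c :=
  ⟨hs.arrow_of_transTriple_of_arrow_middle hr hb.symm hc.symm hbc has ht,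
    hs.1.arrow_of_transTriple_of_arrow_last has ht⟩

theorem stmt10 {V : Type*} (A : V → V → Prop) (hr : Reflexive' A)
    (hs : Stable A) (s : V) (hsol : Soloist A s)
    (b c : V) (hb : b ≠ s) (hc : c ≠ s) (hbc : b ≠ c)
    (ht : TransTriple A s b c) (a : V) (has : A a s) :
    A a b ↔ A a c :=
  stmt10_general A hr hs s b c hb hc hbc ht a has
end

section
/- Let θ : V(D₂) → V(D) be a compression map of reflexive directed graphs. If x₁ ∈ V(D) is a locked clasp, then D₂ contains a locked clasp. -/
/-! Lift the three transitive triples witnessing the locked clasp at `x₁`. Since `θ` is injective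
on arrows between distinct vertices, the two lifts of the arrow `u x₁` coincide, as do the two
lifts of `x₁ v`, so the lifts share their middle vertex; the non-arrow `w y` stays a non-arrow
upstairs because `θ` preserves arrows. -/

namespace IsCompression

variable {V₂ V : Type*} {A₂ : V₂ → V₂ → Prop} {A : V → V → Prop} {θ : V₂ → V}

theorem map_arrow (hθ : IsCompression A₂ A θ) {x y : V₂} (h : A₂ x y) : A (θ x) (θ y) :=
  hθ.2.1 x y h

theorem exists_lift_transTriple (hθ : IsCompression A₂ A θ) {a b c : V}
    (h : TransTriple A a b c) :
    ∃ x y z, TransTriple A₂ x y z ∧ θ x = a ∧ θ y = b ∧ θ z = c :=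
  hθ.2.2.1 a b c h

theorem arrow_eq_of_map_eq (hθ : IsCompression A₂ A θ) {x y x' y' : V₂} (h : A₂ x y)
    (h' : A₂ x' y') (hne : θ x ≠ θ y) (hx : θ x = θ x') (hy : θ y = θ y') :
    x = x' ∧ y = y' :=
  hθ.2.2.2.2.1 x y x' y' (ne_of_apply_ne θ hne) (ne_of_apply_ne θ (hx ▸ hy ▸ hne)) h h' hx hy

end IsCompression

theorem stmt12_general {V₂ V : Type*} (A₂ : V₂ → V₂ → Prop) (A : V → V → Prop)
    (θ : V₂ → V)
    (hθ : IsCompression A₂ A θ) (x₁ : V) (hx : IsLockedClasp A x₁) :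
    ∃ x₂ : V₂, IsLockedClasp A₂ x₂ := by
  obtain ⟨u, v, w, y, hu, hv, hw, hy, huxy, huxv, hwxv, hwy⟩ := hx
  obtain ⟨u₂, x₂, y₂, huxy₂, rfl, rfl, rfl⟩ := hθ.exists_lift_transTriple huxy
  obtain ⟨u₂', x₂', v₂, huxv₂, hu', hx', rfl⟩ := hθ.exists_lift_transTriple huxv
  obtain ⟨w₂, x₂'', v₂', hwxv₂, rfl, hx'', hv'⟩ := hθ.exists_lift_transTriple hwxv
  obtain ⟨rfl, rfl⟩ := hθ.arrow_eq_of_map_eq huxy₂.1 huxv₂.1 hu hu'.symm hx'.symm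
  obtain ⟨rfl, rfl⟩ := hθ.arrow_eq_of_map_eq huxv₂.2.1 hwxv₂.2.1 hv.symm hx''.symm hv'.symm
  exact ⟨x₂, u₂, v₂, w₂, y₂, ne_of_apply_ne θ hu, ne_of_apply_ne θ hv, ne_of_apply_ne θ hw,
    ne_of_apply_ne θ hy, huxy₂, huxv₂, hwxv₂, fun h => hwy (hθ.map_arrow h)⟩

theorem stmt12 {V₂ V : Type*} (A₂ : V₂ → V₂ → Prop) (A : V → V → Prop)
    (θ : V₂ → V) (h₂ : Reflexive' A₂) (h₁ : Reflexive' A)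
    (hθ : IsCompression A₂ A θ) (x₁ : V) (hx : IsLockedClasp A x₁) :
    ∃ x₂ : V₂, IsLockedClasp A₂ x₂ :=
  stmt12_general A₂ A θ hθ x₁ hx
end

section
/- Let D be a stable reflexive directed graph on a finite vertex set in which every clasp is unlocked. Then there exists a preordered directed graph D' and a compression map θ : V(D') → V(D). Conversely, if a stable directed graph D is the compression of a preordered directed graph, then every clasp in D is unlocked. -/
/-! At a vertex `x`, call `w → v` a shortcut through `x` when `w → x → v` is a transitive triple
with `w, v ≠ x`. Shortcuts form a bipartite graph between the in- and out-neighbours of `x`, and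
"no locked clasp at `x`" says precisely that its components are complete bipartite. Split every
vertex `x` into one copy per component (isolated in-neighbours sharing one copy, isolated
out-neighbours another), and send an arrow `x → y` to the arrow from the copy of `x` holding the
out-neighbour `y` to the copy of `y` holding the in-neighbour `x`. Balance and stability make this
relation transitive, and the projection to the first coordinate is a compression.

Conversely, lift the three transitive triples `(u,x,y)`, `(u,x,v)`, `(w,x,v)` of a locked clasp
to a preorder: injectivity on arrows identifies the three lifts of `x` (through `u → x` and
`x → v`), and transitivity upstairs produces the forbidden arrow `w → y`. -/

namespace StableDigraph

variable {V : Type*} {A : V → V → Prop}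

def Shortcut (A : V → V → Prop) (x w v : V) : Prop :=
  w ≠ x ∧ v ≠ x ∧ A w x ∧ A x v ∧ A w v

def shortcutsFrom (A : V → V → Prop) (x w : V) : Set V := {v | Shortcut A x w v}

def shortcutsInto (A : V → V → Prop) (x v : V) : Set V := {w | Shortcut A x w v}

/- A component of the shortcut graph at `x` is labelled by its pair (in-side, out-side). An
isolated in-neighbour gets a label `(_, ∅)` and an isolated out-neighbour one `(∅, _)`, each with
the other side nonempty, so neither is confused with a component or with each other. -/
def inLabel (A : V → V → Prop) (x w : V) : Set V × Set V :=
  ({w' | shortcutsFrom A x w' = shortcutsFrom A x w}, shortcutsFrom A x w)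

def outLabel (A : V → V → Prop) (x v : V) : Set V × Set V :=
  (shortcutsInto A x v, {v' | shortcutsInto A x v' = shortcutsInto A x v})

theorem Shortcut.of_not_isLockedClasp {x u v w y : V} (hx : IsClasp A x → ¬ IsLockedClasp A x)
    (huy : Shortcut A x u y) (huv : Shortcut A x u v) (hwv : Shortcut A x w v) :
    Shortcut A x w y := by
  obtain ⟨hu, hy, hux, hxy, huy⟩ := huy
  obtain ⟨-, hv, -, hxv, huv⟩ := huv
  obtain ⟨hw, -, hwx, -, hwv⟩ := hwv
  refine ⟨hw, hy, hwx, hxy, by_contra fun hwy => ?_⟩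
  exact hx ⟨w, y, hw, hy, hwx, hxy, hwy⟩
    ⟨u, v, w, y, hu, hv, hw, hy, ⟨hux, hxy, huy⟩, ⟨hux, hxv, huv⟩, ⟨hwx, hxv, hwv⟩, hwy⟩

theorem inLabel_eq_outLabel {x w v : V} (hx : IsClasp A x → ¬ IsLockedClasp A x)
    (h : Shortcut A x w v) : inLabel A x w = outLabel A x v := by
  have from_eq {w'} (hw' : Shortcut A x w' v) : shortcutsFrom A x w' = shortcutsFrom A x w :=
    Set.ext fun _ => ⟨fun hv' => hv'.of_not_isLockedClasp hx hw' h,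
      fun hv' => hv'.of_not_isLockedClasp hx h hw'⟩
  have into_eq {v'} (hv' : Shortcut A x w v') : shortcutsInto A x v' = shortcutsInto A x v :=
    Set.ext fun _ => ⟨fun hw' => h.of_not_isLockedClasp hx hv' hw',
      fun hw' => hv'.of_not_isLockedClasp hx h hw'⟩
  refine Prod.ext (Set.ext fun w' => ⟨fun hw' => ?_, from_eq⟩)
    (Set.ext fun v' => ⟨into_eq, fun hv' => ?_⟩)
  · change v ∈ shortcutsFrom A x w'
    exact hw' ▸ h
  · change w ∈ shortcutsInto A x v'
    exact hv' ▸ h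

theorem shortcut_of_inLabel_eq_outLabel {x w v : V} (h : inLabel A x w = outLabel A x v) :
    Shortcut A x w v := by
  have : v ∈ (outLabel A x v).2 := rfl
  rwa [← h] at this

theorem outLabel_eq_of_stable (hr : Reflexive' A) (hs : Stable A) {x y z : V}
    (hxy : A x y) (hxz : A x z) (hyz : A y z) (hy : y ≠ x) (hz : z ≠ x) :
    outLabel A x y = outLabel A x z := by
  suffices shortcutsInto A x y = shortcutsInto A x z by simp only [outLabel, this]
  ext w
  constructor
  · rintro ⟨hw, -, hwx, -, hwy⟩
    refine ⟨hw, hz, hwx, hxz, ?_⟩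
    by_cases hwy' : w = y
    · exact hwy' ▸ hyz
    by_cases hwz : w = z
    · exact hwz ▸ hr z
    by_cases hyz' : y = z
    · exact hyz' ▸ hwy
    exact hs.2 w x y z hw hwy' hwz hy.symm hz.symm hyz' hwx hwy hxy hxz hyz
  · rintro ⟨hw, -, hwx, -, hwz⟩
    exact ⟨hw, hy, hwx, hxy, (hs.1 w x y z hwx hxy hyz hwz).2 hxz⟩

theorem inLabel_eq_of_stable (hr : Reflexive' A) (hs : Stable A) {x y z : V}
    (hxy : A x y) (hxz : A x z) (hyz : A y z) (hx : x ≠ z) (hy : y ≠ z) :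
    inLabel A z x = inLabel A z y := by
  suffices shortcutsFrom A z x = shortcutsFrom A z y by simp only [inLabel, this]
  ext v
  constructor
  · rintro ⟨-, hv, -, hzv, hxv⟩
    exact ⟨hy, hv, hyz, hzv, (hs.1 x y z v hxy hyz hzv hxv).1 hxz⟩
  · rintro ⟨-, hv, -, hzv, hyv⟩
    refine ⟨hx, hv, hxz, hzv, ?_⟩
    by_cases hxy' : x = y
    · exact hxy' ▸ hyv
    by_cases hxv : x = v
    · exact hxv ▸ hr v
    by_cases hyv' : y = v
    · exact hyv' ▸ hxy
    exact hs.2 x y z v hxy' hx hxv hy hyv' (Ne.symm hv) hxy hxz hyz hyv hzv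

/- The copies of `x` are the pairs `(x, ℓ)`; labels `ℓ` that occur at no arrow just give isolated
vertices, which is harmless. -/
def splitGraph (A : V → V → Prop) (p q : V × (Set V × Set V)) : Prop :=
  p = q ∨ p.1 ≠ q.1 ∧ A p.1 q.1 ∧ p.2 = outLabel A p.1 q.1 ∧ q.2 = inLabel A q.1 p.1

theorem splitGraph_mk {a b : V} (hab : a ≠ b) (h : A a b) :
    splitGraph A (a, outLabel A a b) (b, inLabel A b a) :=
  Or.inr ⟨hab, h, rfl, rfl⟩

theorem reflexive_splitGraph : Reflexive' (splitGraph A) :=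
  fun _ => Or.inl rfl

theorem transitive_splitGraph (hr : Reflexive' A) (hs : Stable A)
    (hu : ∀ x, IsClasp A x → ¬ IsLockedClasp A x) : Transitive' (splitGraph A) := by
  rintro ⟨x, k⟩ ⟨y, l⟩ ⟨z, m⟩ (hpq | ⟨hxy, hAxy, hk, hl⟩) hqr
  · exact hpq ▸ hqr
  rcases hqr with hqr | ⟨hyz, hAyz, hl', hm⟩
  · exact hqr ▸ Or.inr ⟨hxy, hAxy, hk, hl⟩
  dsimp only at *
  obtain ⟨-, -, -, -, hAxz⟩ := shortcut_of_inLabel_eq_outLabel (hl ▸ hl')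
  subst hk hm
  by_cases hxz : x = z
  · subst hxz
    exact Or.inl (Prod.ext rfl
      (inLabel_eq_outLabel (hu x) ⟨Ne.symm hxy, Ne.symm hxy, hAyz, hAxy, hr y⟩).symm)
  · exact Or.inr ⟨hxz, hAxz, outLabel_eq_of_stable hr hs hAxy hAxz hAyz (Ne.symm hxy) (Ne.symm hxz),
      (inLabel_eq_of_stable hr hs hAxy hAxz hAyz hxz hyz).symm⟩

theorem exists_splitGraph_lift {a b : V} (h : A a b) :
    ∃ p q, splitGraph A p q ∧ p.1 = a ∧ q.1 = b := by
  by_cases hab : a = b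
  · exact ⟨(a, ∅, ∅), (a, ∅, ∅), Or.inl rfl, rfl, hab⟩
  · exact ⟨_, _, splitGraph_mk hab h, rfl, rfl⟩

theorem exists_splitGraph_lift_transTriple (hr : Reflexive' A) (hs : Stable A)
    (hu : ∀ x, IsClasp A x → ¬ IsLockedClasp A x) {a b c : V} (h : TransTriple A a b c) :
    ∃ p q r, TransTriple (splitGraph A) p q r ∧ p.1 = a ∧ q.1 = b ∧ r.1 = c := by
  obtain ⟨hab, hbc, hac⟩ := h
  by_cases hab' : a = b
  · obtain ⟨p, r, hpr, rfl, rfl⟩ := exists_splitGraph_lift hac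
    exact ⟨p, p, r, ⟨reflexive_splitGraph p, hpr, hpr⟩, rfl, hab', rfl⟩
  by_cases hbc' : b = c
  · obtain ⟨p, q, hpq, rfl, rfl⟩ := exists_splitGraph_lift hab
    exact ⟨p, q, q, ⟨hpq, reflexive_splitGraph q, hpq⟩, rfl, rfl, hbc'⟩
  have hpq := splitGraph_mk hab' hab
  have hqr := splitGraph_mk hbc' hbc
  rw [← inLabel_eq_outLabel (hu b) ⟨hab', Ne.symm hbc', hab, hbc, hac⟩] at hqr
  exact ⟨_, _, _, ⟨hpq, hqr, transitive_splitGraph hr hs hu _ _ _ hpq hqr⟩, rfl, rfl, rfl⟩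

theorem isCompression_fst_splitGraph (hr : Reflexive' A) (hs : Stable A)
    (hu : ∀ x, IsClasp A x → ¬ IsLockedClasp A x) :
    IsCompression (splitGraph A) A Prod.fst := by
  refine ⟨Prod.fst_surjective, ?_, fun _ _ _ => exists_splitGraph_lift_transTriple hr hs hu,
    ?_, ?_, fun a b hab h => ⟨_, _, fun he => hab (congrArg Prod.fst he), splitGraph_mk hab h,
      rfl, rfl⟩⟩
  · rintro p q (rfl | ⟨-, h, -⟩)
    exacts [hr _, h]
  · exact fun p q hpq h => (h.resolve_left hpq).1
  · intro p q p' q' hpq hp'q' h h' h₁ h₂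
    obtain ⟨-, -, hp, hq⟩ := h.resolve_left hpq
    obtain ⟨-, -, hp', hq'⟩ := h'.resolve_left hp'q'
    exact ⟨Prod.ext h₁ (by rw [hp, hp', h₁, h₂]), Prod.ext h₂ (by rw [hq, hq', h₁, h₂])⟩

end StableDigraph

theorem IsCompression.eq_of_map_eq_s19 {V₂ V₁ : Type*} {A₂ : V₂ → V₂ → Prop}
    {A₁ : V₁ → V₁ → Prop} {θ : V₂ → V₁} (hθ : IsCompression A₂ A₁ θ) {x y x' y' : V₂}
    (hxy : A₂ x y) (hx'y' : A₂ x' y') (hx : θ x = θ x') (hy : θ y = θ y') (hne : θ x ≠ θ y) :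
    x = x' ∧ y = y' :=
  hθ.2.2.2.2.1 x y x' y' (fun h => hne (h ▸ rfl)) (fun h => hne (by rw [hx, hy, h]))
    hxy hx'y' hx hy

theorem not_isLockedClasp_of_isCompression {V₂ V₁ : Type*} {A₂ : V₂ → V₂ → Prop}
    {A₁ : V₁ → V₁ → Prop} {θ : V₂ → V₁} (hA₂ : Transitive' A₂) (hθ : IsCompression A₂ A₁ θ)
    (x : V₁) : ¬ IsLockedClasp A₁ x := by
  rintro ⟨u, v, w, y, hu, hv, -, -, huxy, huxv, hwxv, hwy⟩
  obtain ⟨u₁, x₁, y₁, ⟨hux₁, hxy₁, -⟩, rfl, rfl, rfl⟩ := hθ.2.2.1 _ _ _ huxy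
  obtain ⟨u₂, x₂, v₂, ⟨hux₂, hxv₂, -⟩, hu₂, hx₂, rfl⟩ := hθ.2.2.1 _ _ _ huxv
  obtain ⟨w₃, x₃, v₃, ⟨hwx₃, hxv₃, -⟩, rfl, hx₃, hv₃⟩ := hθ.2.2.1 _ _ _ hwxv
  obtain ⟨-, rfl⟩ := hθ.eq_of_map_eq_s19 hux₁ hux₂ hu₂.symm hx₂.symm hu
  obtain ⟨rfl, -⟩ := hθ.eq_of_map_eq_s19 hxv₂ hxv₃ hx₃.symm hv₃.symm (Ne.symm hv)
  exact hwy (hθ.2.1 _ _ (hA₂ _ _ _ hwx₃ hxy₁))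

open StableDigraph in
theorem stmt19 {V : Type} [Finite V] (A : V → V → Prop)
    (hr : Reflexive' A) (hs : Stable A) :
    ((∀ x : V, IsClasp A x → ¬ IsLockedClasp A x) →
      ∃ (V' : Type) (_ : Finite V') (A' : V' → V' → Prop) (θ : V' → V),
        Preordered A' ∧ IsCompression A' A θ) ∧
    (∀ (V₂ : Type) (A₂ : V₂ → V₂ → Prop) (θ : V₂ → V),
      Preordered A₂ → IsCompression A₂ A θ →
      ∀ x : V, IsClasp A x → ¬ IsLockedClasp A x) :=
  ⟨fun hu => ⟨V × (Set V × Set V), inferInstance, splitGraph A, Prod.fst,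
      ⟨reflexive_splitGraph, transitive_splitGraph hr hs hu⟩,
      isCompression_fst_splitGraph hr hs hu⟩,
    fun _ _ _ hA₂ hθ x _ => not_isLockedClasp_of_isCompression hA₂.2 hθ x⟩
end
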